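/- arXiv:1610.08249 — 2 statements merged into one kernel-verified Lean document; each statement's English description precedes it below -/
import Mathlib

section
/- Let C be a set of probability measures on X^∞, let γ_j > V_C be a sequence with lim_{j→∞} γ_j = V_C, and let ν_j be probability measures with sup_{μ∈C} D(μ,ν_j) ≤ γ_j for each j. Then for any weights w_j > 0 with Σ_{j∈ℕ} w_j = 1, the mixture φ := Σ_{j∈ℕ} w_j ν_j satisfies sup_{μ∈C} D(μ,φ) = V_C. -/
open MeasureTheory Filter
open scoped ENNReal

variable {X : Type} [Fintype X] [Nonempty X] [MeasurableSpace X] [DiscreteMeasurableSpace X]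

/-- Cylinder set of sequences beginning with `x`. -/
def cyl {X : Type} {n : ℕ} (x : Fin n → X) : Set (ℕ → X) :=
  {ω | ∀ i : Fin n, ω (i : ℕ) = x i}

/-- `p · log₂(p/q)` with the conventions `0 · log₂(0/q) = 0` and `p · log₂(p/0) = +∞` for `p > 0`. -/
noncomputable def klTerm (p q : ℝ) : EReal :=
  if p = 0 then 0 else if q = 0 then ⊤ else ((p * Real.logb 2 (p / q) : ℝ) : EReal)

/-- Expected cumulative KL divergence `d_n(μ,ρ)`. -/
noncomputable def klDiv (n : ℕ) (μ ρ : Measure (ℕ → X)) : EReal :=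
  ∑ x : Fin n → X, klTerm (μ (cyl x)).toReal (ρ (cyl x)).toReal

/-- Asymptotic average KL loss `D(μ,ρ)`. -/
noncomputable def Dbar (μ ρ : Measure (ℕ → X)) : EReal :=
  Filter.limsup (fun n : ℕ => (((n : ℝ)⁻¹ : ℝ) : EReal) * klDiv n μ ρ) Filter.atTop

/-- Minimax value `V_C`. -/
noncomputable def Vmin (C : Set (Measure (ℕ → X))) : EReal :=
  ⨅ ρ : {ρ : Measure (ℕ → X) // IsProbabilityMeasure ρ}, ⨆ μ ∈ C, Dbar μ ρ.1

/-- Countable mixture `Σ_k v_k μ_k`. -/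
noncomputable def mixture (v : ℕ → ℝ) (μs : ℕ → Measure (ℕ → X)) : Measure (ℕ → X) :=
  MeasureTheory.Measure.sum (fun k => ENNReal.ofReal (v k) • μs k)

lemma measurableSet_cyl {n : ℕ} (x : Fin n → X) : MeasurableSet (cyl x) := by
  have : cyl x = ⋂ i : Fin n, (fun ω : ℕ → X => ω (i : ℕ)) ⁻¹' {x i} := by
    ext ω; simp [cyl]
  rw [this]
  exact MeasurableSet.iInter fun i =>
    (measurable_pi_apply _) (MeasurableSet.singleton _)

lemma sum_cyl (μ : Measure (ℕ → X)) [IsProbabilityMeasure μ] (n : ℕ) :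
    ∑ x : Fin n → X, μ (cyl x) = 1 := by
  have hdisj : Pairwise (Function.onFun Disjoint fun x : Fin n → X => cyl x) := by
    intro x y hxy
    rw [Function.onFun, Set.disjoint_left]
    intro ω hx hy
    exact hxy (funext fun i => (hx i).symm.trans (hy i))
  have hU : (⋃ x : Fin n → X, cyl x) = Set.univ := by
    ext ω
    simp only [Set.mem_iUnion, Set.mem_univ, iff_true]
    exact ⟨fun i => ω i, fun i => rfl⟩
  have := measure_iUnion (μ := μ) hdisj (fun x => measurableSet_cyl x)
  rw [hU, measure_univ, tsum_fintype] at this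
  exact this.symm

lemma sum_cyl_toReal (μ : Measure (ℕ → X)) [IsProbabilityMeasure μ] (n : ℕ) :
    ∑ x : Fin n → X, (μ (cyl x)).toReal = 1 := by
  rw [← ENNReal.toReal_sum (fun x _ => measure_ne_top μ _), sum_cyl, ENNReal.toReal_one]

lemma klTerm_ne_bot (p q : ℝ) : klTerm p q ≠ ⊥ := by
  unfold klTerm
  split_ifs <;> simp [← EReal.coe_mul]

lemma klDiv_ne_bot (n : ℕ) (μ ρ : Measure (ℕ → X)) : klDiv n μ ρ ≠ ⊥ := by
  unfold klDiv
  refine Finset.sum_induction _ (fun a => a ≠ ⊥) (fun a b ha hb => ?_) (by simp)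
    (fun x _ => klTerm_ne_bot _ _)
  simp [EReal.add_eq_bot_iff, ha, hb]

lemma EReal.coe_fsum {α : Type*} (s : Finset α) (f : α → ℝ) :
    ((∑ a ∈ s, f a : ℝ) : EReal) = ∑ a ∈ s, ((f a : ℝ) : EReal) :=
  map_sum (⟨⟨(fun x : ℝ => (x : EReal)), EReal.coe_zero⟩, EReal.coe_add⟩ : ℝ →+ EReal) f s

lemma klTerm_le {p q q' w : ℝ} (hp : 0 ≤ p) (hq' : 0 ≤ q') (hw : 0 < w)
    (h : w * q' ≤ q) :
    klTerm p q ≤ klTerm p q' + ((p * Real.logb 2 w⁻¹ : ℝ) : EReal) := by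
  rcases eq_or_lt_of_le hp with hp0 | hp0
  · simp [klTerm, ← hp0]
  rcases eq_or_lt_of_le hq' with hq'0 | hq'0
  · rw [klTerm, klTerm, if_neg hp0.ne', if_neg hp0.ne', if_pos hq'0.symm,
      EReal.top_add_of_ne_bot (EReal.coe_ne_bot _)]
    exact le_top
  have hqpos : 0 < q := lt_of_lt_of_le (mul_pos hw hq'0) h
  rw [klTerm, klTerm, if_neg hp0.ne', if_neg hqpos.ne', if_neg hp0.ne', if_neg hq'0.ne',
    ← EReal.coe_add, EReal.coe_le_coe_iff, ← mul_add,
    ← Real.logb_mul (by positivity) (by positivity)]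
  have harg : p / q ≤ p / q' * w⁻¹ := by
    have heq : p / q' * w⁻¹ = p / (w * q') := by
      rw [mul_comm w q', ← div_div, div_eq_mul_inv (p / q')]
    rw [heq]
    exact div_le_div_of_nonneg_left hp (mul_pos hw hq'0) h
  exact mul_le_mul_of_nonneg_left
    (Real.logb_le_logb_of_le one_lt_two (by positivity) harg) hp

lemma mixture_apply_ge (w : ℕ → ℝ) (ν : ℕ → Measure (ℕ → X)) (j : ℕ)
    {s : Set (ℕ → X)} (hs : MeasurableSet s) :
    ENNReal.ofReal (w j) * ν j s ≤ mixture w ν s := by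
  rw [mixture, Measure.sum_apply _ hs]
  have : ENNReal.ofReal (w j) * ν j s = (ENNReal.ofReal (w j) • ν j) s := by
    simp [Measure.smul_apply, smul_eq_mul]
  rw [this]
  exact ENNReal.le_tsum j

lemma mixture_prob (w : ℕ → ℝ) (hw : ∀ j, 0 < w j) (hwsum : (∑' j, w j) = 1)
    (ν : ℕ → Measure (ℕ → X)) (hν : ∀ j, IsProbabilityMeasure (ν j)) :
    IsProbabilityMeasure (mixture w ν) := by
  have hsummable : Summable w := by
    by_contra h
    rw [tsum_eq_zero_of_not_summable h] at hwsum
    norm_num at hwsum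
  constructor
  rw [mixture, Measure.sum_apply _ MeasurableSet.univ]
  have : ∀ j, (ENNReal.ofReal (w j) • ν j) Set.univ = ENNReal.ofReal (w j) := by
    intro j
    haveI := hν j
    simp [Measure.smul_apply, smul_eq_mul]
  simp_rw [this]
  rw [← ENNReal.ofReal_tsum_of_nonneg (fun j => (hw j).le) hsummable, hwsum,
    ENNReal.ofReal_one]

lemma klDiv_mixture_le (μ : Measure (ℕ → X)) [IsProbabilityMeasure μ]
    (w : ℕ → ℝ) (hw : ∀ j, 0 < w j)
    (ν : ℕ → Measure (ℕ → X)) (hν : ∀ j, IsProbabilityMeasure (ν j))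
    (hφ : IsProbabilityMeasure (mixture w ν)) (j : ℕ) (n : ℕ) :
    klDiv n μ (mixture w ν) ≤ klDiv n μ (ν j)
      + ((Real.logb 2 (w j)⁻¹ : ℝ) : EReal) := by
  set c := Real.logb 2 (w j)⁻¹ with hc
  have step : klDiv n μ (mixture w ν) ≤
      ∑ x : Fin n → X, (klTerm (μ (cyl x)).toReal ((ν j) (cyl x)).toReal
        + (((μ (cyl x)).toReal * c : ℝ) : EReal)) := by
    refine Finset.sum_le_sum fun x _ => ?_
    refine klTerm_le ENNReal.toReal_nonneg ENNReal.toReal_nonneg (hw j) ?_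
    have h1 := mixture_apply_ge w ν j (measurableSet_cyl x)
    have h2 := ENNReal.toReal_mono (measure_ne_top (mixture w ν) _) h1
    rwa [ENNReal.toReal_mul, ENNReal.toReal_ofReal (hw j).le] at h2
  refine step.trans ?_
  rw [Finset.sum_add_distrib, ← EReal.coe_fsum, ← Finset.sum_mul, sum_cyl_toReal, one_mul]
  rfl

lemma aux_mul (a b : EReal) (c r : ℝ) (hr : 0 < r) (hab : a ≤ b + (c : EReal))
    (ha : a ≠ ⊥) (hb : b ≠ ⊥) :
    (r : EReal) * a ≤ (r : EReal) * b + ((r * c : ℝ) : EReal) := by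
  induction b using EReal.rec with
  | bot => exact absurd rfl hb
  | top =>
      rw [EReal.mul_top_of_pos (by exact_mod_cast hr),
        EReal.top_add_of_ne_bot (EReal.coe_ne_bot _)]
      exact le_top
  | coe br =>
      rw [← EReal.coe_add] at hab
      have hat : a ≠ ⊤ := by
        intro h
        rw [h, top_le_iff] at hab
        exact EReal.coe_ne_top _ hab
      induction a using EReal.rec with
      | bot => exact absurd rfl ha
      | top => exact absurd rfl hat
      | coe ar =>
          rw [EReal.coe_le_coe_iff] at hab
          rw [← EReal.coe_mul, ← EReal.coe_mul, ← EReal.coe_add, EReal.coe_le_coe_iff]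
          nlinarith

lemma Dbar_mixture_le (μ : Measure (ℕ → X)) [IsProbabilityMeasure μ]
    (w : ℕ → ℝ) (hw : ∀ j, 0 < w j)
    (ν : ℕ → Measure (ℕ → X)) (hν : ∀ j, IsProbabilityMeasure (ν j))
    (hφ : IsProbabilityMeasure (mixture w ν)) (j : ℕ) :
    Dbar μ (mixture w ν) ≤ Dbar μ (ν j) := by
  set c := Real.logb 2 (w j)⁻¹ with hc
  set g : ℕ → EReal := fun n => (((n : ℝ)⁻¹ : ℝ) : EReal) * klDiv n μ (ν j) with hg
  set h : ℕ → EReal := fun n => (((n : ℝ)⁻¹ * c : ℝ) : EReal) with hh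
  have hmono : Dbar μ (mixture w ν) ≤ Filter.limsup (g + h) Filter.atTop := by
    refine Filter.limsup_le_limsup (Filter.eventually_atTop.2 ⟨1, fun n hn => ?_⟩)
    show (((n : ℝ)⁻¹ : ℝ) : EReal) * klDiv n μ (mixture w ν) ≤ g n + h n
    have hr : (0 : ℝ) < (n : ℝ)⁻¹ := by
      have : (0 : ℝ) < (n : ℝ) := by exact_mod_cast hn
      positivity
    exact aux_mul _ _ c _ hr (klDiv_mixture_le μ w hw ν hν hφ j n)
      (klDiv_ne_bot n μ _) (klDiv_ne_bot n μ _)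
  have hh0 : Filter.limsup h Filter.atTop = 0 := by
    have : Filter.Tendsto h Filter.atTop (nhds ((0 : ℝ) : EReal)) := by
      rw [hh]
      refine EReal.tendsto_coe.2 ?_
      simpa using tendsto_inv_atTop_nhds_zero_nat.mul_const c
    rw [EReal.coe_zero] at this
    exact this.limsup_eq
  have hadd := EReal.limsup_add_le (u := g) (v := h) (f := Filter.atTop)
    (Or.inr (by rw [hh0]; simp)) (Or.inr (by rw [hh0]; simp))
  rw [hh0, add_zero] at hadd
  exact hmono.trans hadd

/-- if γ_j > V_C with γ_j → V_C, and ν_j are probability measures with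
sup_{μ∈C} D(μ,ν_j) ≤ γ_j, then for any positive weights w_j summing to 1 the mixture
φ = Σ_j w_j ν_j satisfies sup_{μ∈C} D(μ,φ) = V_C. -/
theorem statement15 (C : Set (Measure (ℕ → X))) (hC : ∀ μ ∈ C, IsProbabilityMeasure μ)
    (γ : ℕ → ℝ) (hγgt : ∀ j, Vmin C < ((γ j : ℝ) : EReal))
    (hγlim : Filter.Tendsto (fun j : ℕ => ((γ j : ℝ) : EReal)) Filter.atTop (nhds (Vmin C)))
    (ν : ℕ → Measure (ℕ → X)) (hν : ∀ j, IsProbabilityMeasure (ν j))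
    (hνγ : ∀ j, (⨆ μ ∈ C, Dbar μ (ν j)) ≤ ((γ j : ℝ) : EReal))
    (w : ℕ → ℝ) (hw : ∀ j, 0 < w j) (hwsum : (∑' j, w j) = 1) :
    (⨆ μ ∈ C, Dbar μ (mixture w ν)) = Vmin C := by
  have hφ : IsProbabilityMeasure (mixture w ν) := mixture_prob w hw hwsum ν hν
  apply le_antisymm
  · refine iSup₂_le fun μ hμ => ?_
    haveI := hC μ hμ
    refine ge_of_tendsto hγlim (Filter.Eventually.of_forall fun j => ?_)
    refine le_trans (Dbar_mixture_le μ w hw ν hν hφ j) ?_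
    exact le_trans (le_iSup₂ (f := fun μ' (_ : μ' ∈ C) => Dbar μ' (ν j)) μ hμ) (hνγ j)
  · exact iInf_le
      (fun ρ : {ρ : Measure (ℕ → X) // IsProbabilityMeasure ρ} => ⨆ μ ∈ C, Dbar μ ρ.1)
      ⟨mixture w ν, hφ⟩
end

section
/- Let C be the set of all Dirac probability measures δ_x on X^∞, over all sequences x ∈ X^∞ (i.e., the data is an arbitrary deterministic sequence). Then V_C = log₂|X|, the maximal possible worst-case asymptotic error. -/
open MeasureTheory Filter
open scoped ENNReal

variable {X : Type} [Fintype X] [Nonempty X] [MeasurableSpace X] [DiscreteMeasurableSpace X]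

/-! The uniform product measure gives every cylinder of length `n` mass `|X|⁻ⁿ`, so it predicts
every deterministic sequence at loss exactly `log₂|X|` per symbol. Conversely, against any `ρ`
an adversary extends its prefix by the symbol whose cylinder has the least `ρ`-mass, at most a
`1/|X|` fraction of the current cylinder; the resulting sequence has prefixes of `ρ`-mass at
most `|X|⁻ⁿ`, hence loss at least `log₂|X|`. -/

section Cylinders

variable {α : Type}

lemma measurableSet_cyl_s16 [MeasurableSpace α] [MeasurableSingletonClass α] {n : ℕ}
    (w : Fin n → α) : MeasurableSet (cyl w) := by
  have : cyl w = ⋂ i : Fin n, (fun ω : ℕ → α => ω i) ⁻¹' {w i} := by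
    ext ω
    simp [cyl]
  rw [this]
  exact .iInter fun i => measurable_pi_apply _ (.singleton _)

lemma cyl_eq_iUnion_snoc {n : ℕ} (w : Fin n → α) : cyl w = ⋃ a : α, cyl (Fin.snoc w a) := by
  ext ω
  simp only [Set.mem_iUnion]
  constructor
  · intro h
    refine ⟨ω n, Fin.lastCases ?_ fun i => ?_⟩
    · simp
    · simpa using h i
  · rintro ⟨a, h⟩ i
    simpa using h i.castSucc

lemma pairwise_disjoint_cyl_snoc {n : ℕ} (w : Fin n → α) :
    Pairwise (Function.onFun Disjoint fun a : α => cyl (Fin.snoc w a)) := by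
  intro a b hab
  refine Set.disjoint_left.2 fun ω ha hb => hab ?_
  simpa using (ha (Fin.last n)).symm.trans (hb (Fin.last n))

lemma measure_cyl_eq_sum_snoc [Fintype α] [MeasurableSpace α] [MeasurableSingletonClass α]
    (ρ : Measure (ℕ → α)) {n : ℕ} (w : Fin n → α) :
    ρ (cyl w) = ∑ a : α, ρ (cyl (Fin.snoc w a)) := by
  rw [cyl_eq_iUnion_snoc w, measure_iUnion (pairwise_disjoint_cyl_snoc w)
    fun a => measurableSet_cyl_s16 _, tsum_fintype]

lemma infinitePi_cyl [MeasurableSpace α] [MeasurableSingletonClass α] (μ : ℕ → Measure α)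
    [∀ i, IsProbabilityMeasure (μ i)] {n : ℕ} (w : Fin n → α) :
    Measure.infinitePi μ (cyl w) = ∏ i : Fin n, μ i {w i} := by
  let t : ℕ → Set α := fun i => {a | ∀ h : i < n, a = w ⟨i, h⟩}
  have ht : ∀ i : Fin n, t i = {w i} := fun i => by
    ext a
    simp [t, i.isLt]
  have hcyl : cyl w = Set.pi (Finset.range n) t := by
    ext ω
    simp [cyl, t, Fin.forall_iff]
  rw [hcyl, Measure.infinitePi_pi, ← Fin.prod_univ_eq_prod_range (fun i => μ i (t i))]
  · simp only [ht]
  · intro i hi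
    change MeasurableSet (t (⟨i, Finset.mem_range.1 hi⟩ : Fin n))
    rw [ht]
    exact .singleton _

lemma card_pow_mul_infinitePi_uniform_cyl [Fintype α] [Nonempty α] [MeasurableSpace α]
    [MeasurableSingletonClass α] {n : ℕ} (w : Fin n → α) :
    (Fintype.card α : ℝ≥0∞) ^ n *
      Measure.infinitePi (fun _ : ℕ => (PMF.uniformOfFintype α).toMeasure) (cyl w) = 1 := by
  simp only [infinitePi_cyl, PMF.toMeasure_apply_singleton _ _ (.singleton _),
    PMF.uniformOfFintype_apply, Finset.prod_const, Finset.card_univ, Fintype.card_fin, ← mul_pow]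
  rw [ENNReal.mul_inv_cancel (by simp) (by simp), one_pow]

end Cylinders

section Greedy

variable {α : Type} [Fintype α] [Nonempty α] [MeasurableSpace α] [MeasurableSingletonClass α]

lemma exists_card_mul_measure_cyl_snoc_le (ρ : Measure (ℕ → α)) {n : ℕ} (w : Fin n → α) :
    ∃ a, Fintype.card α * ρ (cyl (Fin.snoc w a)) ≤ ρ (cyl w) := by
  obtain ⟨a, ha⟩ := Finite.exists_min fun a => ρ (cyl (Fin.snoc w a))
  refine ⟨a, ?_⟩
  rw [measure_cyl_eq_sum_snoc ρ w]
  simpa using Finset.card_nsmul_le_sum Finset.univ _ _ fun b _ => ha b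

noncomputable def greedyLetter (ρ : Measure (ℕ → α)) {n : ℕ} (w : Fin n → α) : α :=
  (exists_card_mul_measure_cyl_snoc_le ρ w).choose

noncomputable def greedyPrefix (ρ : Measure (ℕ → α)) : (n : ℕ) → Fin n → α
  | 0 => Fin.elim0
  | n + 1 => Fin.snoc (greedyPrefix ρ n) (greedyLetter ρ (greedyPrefix ρ n))

noncomputable def greedySeq (ρ : Measure (ℕ → α)) (n : ℕ) : α :=
  greedyLetter ρ (greedyPrefix ρ n)

lemma greedyPrefix_eq (ρ : Measure (ℕ → α)) :
    ∀ n, greedyPrefix ρ n = fun i : Fin n => greedySeq ρ i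
  | 0 => funext fun i => i.elim0
  | n + 1 => by
    change Fin.snoc (α := fun _ => α) (greedyPrefix ρ n) (greedySeq ρ n) = _
    rw [greedyPrefix_eq ρ n]
    exact Fin.snoc_init_self (fun i : Fin (n + 1) => greedySeq ρ i)

lemma card_pow_mul_measure_cyl_greedySeq_le (ρ : Measure (ℕ → α)) (n : ℕ) :
    (Fintype.card α : ℝ≥0∞) ^ n * ρ (cyl fun i : Fin n => greedySeq ρ i) ≤ ρ Set.univ := by
  rw [← greedyPrefix_eq]
  induction n with
  | zero => simpa using measure_mono (Set.subset_univ _)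
  | succ n ih =>
    calc (Fintype.card α : ℝ≥0∞) ^ (n + 1) * ρ (cyl (greedyPrefix ρ (n + 1)))
        = (Fintype.card α : ℝ≥0∞) ^ n *
            (Fintype.card α * ρ (cyl (greedyPrefix ρ (n + 1)))) := by rw [pow_succ, mul_assoc]
      _ ≤ (Fintype.card α : ℝ≥0∞) ^ n * ρ (cyl (greedyPrefix ρ n)) :=
          mul_le_mul_right (exists_card_mul_measure_cyl_snoc_le ρ _).choose_spec _
      _ ≤ ρ Set.univ := ih

end Greedy

section Loss

lemma klTerm_one_zero : klTerm 1 0 = ⊤ := by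
  simp [klTerm]

lemma klTerm_one_of_ne_zero {q : ℝ} (hq : q ≠ 0) :
    klTerm 1 q = ((-Real.logb 2 q : ℝ) : EReal) := by
  simp [klTerm, hq, Real.logb_inv]

lemma inv_mul_klTerm_one_of_pow_mul_eq_one {N q : ℝ} {n : ℕ} (hn : n ≠ 0) (hN : 0 < N)
    (hq : N ^ n * q = 1) :
    (((n : ℝ)⁻¹ : ℝ) : EReal) * klTerm 1 q = ((Real.logb 2 N : ℝ) : EReal) := by
  have hq' : q = (N ^ n)⁻¹ := eq_inv_of_mul_eq_one_right hq
  rw [hq', klTerm_one_of_ne_zero (by positivity), ← EReal.coe_mul, Real.logb_inv,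
    Real.logb_pow, neg_neg]
  congr 1
  field_simp

lemma le_inv_mul_klTerm_one_of_pow_mul_le_one {N q : ℝ} {n : ℕ} (hn : n ≠ 0) (hN : 0 < N)
    (hq₀ : 0 ≤ q) (hq : N ^ n * q ≤ 1) :
    ((Real.logb 2 N : ℝ) : EReal) ≤ (((n : ℝ)⁻¹ : ℝ) : EReal) * klTerm 1 q := by
  have hn' : (0 : ℝ) < n := by positivity
  rcases hq₀.eq_or_lt with rfl | hq₀
  · rw [klTerm_one_zero, EReal.coe_mul_top_of_pos (inv_pos.2 hn')]
    exact le_top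
  rw [klTerm_one_of_ne_zero hq₀.ne', ← EReal.coe_mul, EReal.coe_le_coe_iff, le_inv_mul_iff₀ hn']
  have := Real.logb_nonpos one_lt_two (by positivity) hq
  rw [Real.logb_mul (by positivity) hq₀.ne', Real.logb_pow] at this
  linarith

variable {α : Type} [Fintype α]

lemma toReal_card_pow_mul {n : ℕ} {m : ℝ≥0∞} :
    ((Fintype.card α : ℝ≥0∞) ^ n * m).toReal = (Fintype.card α : ℝ) ^ n * m.toReal := by
  rw [ENNReal.toReal_mul, ENNReal.toReal_pow, ENNReal.toReal_natCast]

variable [MeasurableSpace α] [MeasurableSingletonClass α]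

lemma klDiv_dirac (x : ℕ → α) (ρ : Measure (ℕ → α)) (n : ℕ) :
    klDiv n (Measure.dirac x) ρ = klTerm 1 (ρ (cyl fun i : Fin n => x i)).toReal := by
  rw [klDiv, Finset.sum_eq_single_of_mem (fun i : Fin n => x i) (Finset.mem_univ _)]
  · rw [Measure.dirac_apply_of_mem (show x ∈ cyl _ from fun i => rfl), ENNReal.toReal_one]
  · intro w _ hw
    have hx : x ∉ cyl w := fun h => hw (funext fun i => (h i).symm)
    simp [Measure.dirac_apply' _ (measurableSet_cyl_s16 w), hx, klTerm]

variable [Nonempty α]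

lemma Dbar_dirac_of_card_pow_mul_measure_cyl_eq_one (x : ℕ → α) {ρ : Measure (ℕ → α)}
    (hρ : ∀ n, (Fintype.card α : ℝ≥0∞) ^ n * ρ (cyl fun i : Fin n => x i) = 1) :
    Dbar (Measure.dirac x) ρ = ((Real.logb 2 (Fintype.card α) : ℝ) : EReal) := by
  refine (limsup_congr (eventually_atTop.2 ⟨1, fun n hn => ?_⟩)).trans (limsup_const _)
  rw [klDiv_dirac]
  refine inv_mul_klTerm_one_of_pow_mul_eq_one (by omega) (by exact_mod_cast Fintype.card_pos) ?_
  rw [← toReal_card_pow_mul, hρ, ENNReal.toReal_one]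

lemma le_Dbar_dirac_of_card_pow_mul_measure_cyl_le (x : ℕ → α) {ρ : Measure (ℕ → α)}
    (hρ : ∀ n, (Fintype.card α : ℝ≥0∞) ^ n * ρ (cyl fun i : Fin n => x i) ≤ 1) :
    ((Real.logb 2 (Fintype.card α) : ℝ) : EReal) ≤ Dbar (Measure.dirac x) ρ := by
  refine le_limsup_of_frequently_le (Eventually.frequently
    (eventually_atTop.2 ⟨1, fun n hn => ?_⟩))
  rw [klDiv_dirac]
  refine le_inv_mul_klTerm_one_of_pow_mul_le_one (by omega)
    (by exact_mod_cast Fintype.card_pos) ENNReal.toReal_nonneg ?_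
  rw [← toReal_card_pow_mul]
  exact ENNReal.toReal_le_of_le_ofReal zero_le_one (by simpa using hρ n)

end Loss

/-- for C the set of all Dirac measures on one-way infinite sequences
(arbitrary deterministic data), V_C = log₂|X|, the maximal possible worst-case
asymptotic error. -/
theorem statement16 :
    Vmin {m : Measure (ℕ → X) | ∃ x : ℕ → X, m = Measure.dirac x}
      = ((Real.logb 2 (Fintype.card X) : ℝ) : EReal) := by
  apply le_antisymm
  · let ρ := Measure.infinitePi fun _ : ℕ => (PMF.uniformOfFintype X).toMeasure
    refine iInf_le_of_le ⟨ρ, inferInstance⟩ (iSup₂_le ?_)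
    rintro _ ⟨x, rfl⟩
    exact (Dbar_dirac_of_card_pow_mul_measure_cyl_eq_one x fun n =>
      card_pow_mul_infinitePi_uniform_cyl _).le
  · refine le_iInf fun ⟨ρ, hρ⟩ => ?_
    have hx := card_pow_mul_measure_cyl_greedySeq_le ρ
    rw [measure_univ] at hx
    exact (le_Dbar_dirac_of_card_pow_mul_measure_cyl_le _ hx).trans
      (le_iSup₂_of_le (Measure.dirac (greedySeq ρ)) ⟨greedySeq ρ, rfl⟩ le_rfl)
end
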